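/- Let p ≥ 2 and let ψ(t) = b_0 t^q + b_1 t^{q-1} + ... + b_{q+s} t^{-s} be a Laurent polynomial such that the map t ↦ (t^p, ψ(t)) from ℂ* to ℂ² is injective and ψ is not a function of t^p (i.e. the curve is not multiply covered). Then there is exactly one exponent d appearing in ψ with nonzero coefficient such that d is not divisible by p; all other monomials of ψ are powers of t^p. -/

import Mathlib

/-!
Let `ζ` be a primitive `p`-th root of unity. Since `(ζ t)^p = t^p`, injectivity forces
`ψ(ζ t) ≠ ψ(t)` for every `t ≠ 0`. The difference `ψ(ζ t) - ψ(t) = ∑ c_i (ζ^i - 1) t^i` only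
involves the exponents not divisible by `p`, all with nonzero coefficients. If there were two
of them, this would be a Laurent polynomial with at least two monomials, and after clearing
the lowest power of `t` it becomes a nonconstant polynomial with nonzero constant term, hence
it has a nonzero root.
-/

open Polynomial

namespace Polynomial

variable {K : Type*} [Field K]

/-- The polynomial `t^(-m) ∑_{i ∈ S} a_i t^i`; exponents are truncated by `Int.toNat`, so it is
only meaningful when `m ≤ i` for all `i ∈ S`. -/
noncomputable def ofZpowSum (S : Finset ℤ) (a : ℤ → K) (m : ℤ) : K[X] :=
  ∑ i ∈ S, C (a i) * X ^ (i - m).toNat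

theorem coeff_ofZpowSum {S : Finset ℤ} {a : ℤ → K} {m : ℤ} (hm : ∀ i ∈ S, m ≤ i) {j : ℤ}
    (hj : j ∈ S) : (ofZpowSum S a m).coeff (j - m).toNat = a j := by
  rw [ofZpowSum, finsetSum_coeff, Finset.sum_eq_single j]
  · rw [coeff_C_mul_X_pow, if_pos rfl]
  · intro i hi hij
    have := hm i hi
    have := hm j hj
    rw [coeff_C_mul_X_pow, if_neg (by omega)]
  · exact fun h => (h hj).elim

theorem zpow_mul_eval_ofZpowSum {S : Finset ℤ} {a : ℤ → K} {m : ℤ} (hm : ∀ i ∈ S, m ≤ i)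
    {t : K} (ht : t ≠ 0) : t ^ m * (ofZpowSum S a m).eval t = ∑ i ∈ S, a i * t ^ i := by
  rw [ofZpowSum, eval_finsetSum, Finset.mul_sum]
  refine Finset.sum_congr rfl fun i hi => ?_
  rw [eval_mul, eval_pow, eval_C, eval_X, ← zpow_natCast,
    Int.toNat_of_nonneg (sub_nonneg.mpr (hm i hi)), mul_left_comm, ← zpow_add₀ ht,
    add_sub_cancel]

end Polynomial

theorem exists_ne_zero_sum_mul_zpow_eq_zero {K : Type*} [Field K] [IsAlgClosed K]
    {S : Finset ℤ} {a : ℤ → K} (ha : ∀ i ∈ S, a i ≠ 0) {d₁ d₂ : ℤ} (h₁ : d₁ ∈ S)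
    (h₂ : d₂ ∈ S) (hne : d₁ ≠ d₂) : ∃ t ≠ 0, ∑ i ∈ S, a i * t ^ i = 0 := by
  have hS : S.Nonempty := ⟨d₁, h₁⟩
  set m := S.min' hS
  have hm : ∀ i ∈ S, m ≤ i := fun i hi => S.min'_le i hi
  obtain ⟨d, hdS, hdm⟩ : ∃ d ∈ S, d ≠ m := by
    by_cases h : d₁ = m
    · exact ⟨d₂, h₂, fun h' => hne (h.trans h'.symm)⟩
    · exact ⟨d₁, h₁, h⟩
  set P := ofZpowSum S a m
  have hP0 : P.coeff 0 ≠ 0 := by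
    simpa [P, m] using (coeff_ofZpowSum hm (S.min'_mem hS)).trans_ne (ha _ (S.min'_mem hS))
  have hdeg : P.degree ≠ 0 := by
    have hd : 0 < (d - m).toNat := by have := hm d hdS; omega
    exact (lt_of_lt_of_le (by exact_mod_cast hd)
      (le_degree_of_ne_zero ((coeff_ofZpowSum hm hdS).trans_ne (ha d hdS)))).ne'
  obtain ⟨t, ht⟩ := IsAlgClosed.exists_root P hdeg
  have ht0 : t ≠ 0 := by
    rintro rfl
    exact hP0 (by rwa [coeff_zero_eq_eval_zero])
  exact ⟨t, ht0, by rw [← zpow_mul_eval_ofZpowSum hm ht0, ht.eq_zero, mul_zero]⟩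

theorem IsPrimitiveRoot.sum_mul_zpow_mul_sub_sum {K : Type*} [Field K] {ζ : K} {p : ℕ}
    (hζ : IsPrimitiveRoot ζ p) (s : Finset ℤ) (a : ℤ → K) (t : K) :
    ∑ i ∈ s, a i * (ζ * t) ^ i - ∑ i ∈ s, a i * t ^ i =
      ∑ i ∈ s.filter (fun i => ¬ (p : ℤ) ∣ i), a i * (ζ ^ i - 1) * t ^ i := by
  rw [← Finset.sum_sub_distrib, Finset.sum_filter]
  refine Finset.sum_congr rfl fun i _ => ?_
  split_ifs with h
  · rw [mul_zpow, (hζ.zpow_eq_one_iff_dvd i).mpr h]; ring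
  · rw [mul_zpow]; ring

theorem laurent_injective_one_nondivisible_exponent
    (p : ℕ) (hp : 2 ≤ p) (c : ℤ →₀ ℂ)
    (hinj : Set.InjOn (fun t : ℂ => (t ^ p, ∑ i ∈ c.support, c i * t ^ i))
      {t : ℂ | t ≠ 0})
    (hprim : ¬ ∀ i ∈ c.support, (p : ℤ) ∣ i) :
    ∃! d : ℤ, d ∈ c.support ∧ ¬ (p : ℤ) ∣ d := by
  push Not at hprim
  obtain ⟨d₁, hd₁⟩ := hprim
  refine ⟨d₁, hd₁, fun d₂ hd₂ => by_contra fun hne => ?_⟩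
  have hζ := Complex.isPrimitiveRoot_exp p (by omega)
  set ζ := Complex.exp (2 * Real.pi * Complex.I / p)
  have hcoeff : ∀ i ∈ c.support.filter (fun i => ¬ (p : ℤ) ∣ i), c i * (ζ ^ i - 1) ≠ 0 := by
    intro i hi
    rw [Finset.mem_filter, Finsupp.mem_support_iff] at hi
    exact mul_ne_zero hi.1 (sub_ne_zero.mpr fun h => hi.2 ((hζ.zpow_eq_one_iff_dvd i).mp h))
  obtain ⟨t, ht, hroot⟩ := exists_ne_zero_sum_mul_zpow_eq_zero hcoeff
    (Finset.mem_filter.mpr hd₂) (Finset.mem_filter.mpr hd₁) hne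
  have hrot : ζ * t = t := hinj (mul_ne_zero (hζ.ne_zero (by omega)) ht) ht <| Prod.ext
    (by simp only [mul_pow, hζ.pow_eq_one, one_mul])
    (sub_eq_zero.mp ((hζ.sum_mul_zpow_mul_sub_sum _ _ t).trans hroot))
  exact hζ.ne_one (by omega) (mul_right_cancel₀ ht (hrot.trans (one_mul t).symm))
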